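/- If −2√(g h_l) < v_l ≤ 0, then the discharge-form Lax curve φ̃_l has exactly one zero in (0,∞), namely h = (v_l + 2√(g h_l))²/(4g); i.e., for h > 0 one has φ̃_l(h) = 0 if and only if h = (v_l + 2√(g h_l))²/(4g). -/

import Mathlib

/-- Lax curve through the left state `(hl, vl)`. -/
noncomputable def phil (g hl vl h : ℝ) : ℝ :=
  if h ≤ hl then vl + 2 * Real.sqrt (g * hl) - 2 * Real.sqrt (g * h)
  else vl - (h - hl) * Real.sqrt (g * (h + hl) / (2 * h * hl))

/-- Discharge-form Lax curve through the left state. -/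
noncomputable def philTilde (g hl vl h : ℝ) : ℝ := h * phil g hl vl h

/-!
On the rarefaction branch `h ≤ h_l`, `φ_l(h) = c - 2√(g h)` with `c = v_l + 2√(g h_l) > 0`,
which vanishes exactly at `h* = c²/(4g)`; since `v_l ≤ 0`, `c ≤ 2√(g h_l)` and so `h* ≤ h_l`
lies on that branch. On the shock branch `h > h_l` the curve is `v_l` minus a positive
quantity, hence negative when `v_l ≤ 0`. As `h > 0`, the zeros of `φ̃_l = h φ_l` are those of `φ_l`.
-/

theorem sub_two_mul_sqrt_mul_eq_zero_iff {c g h : ℝ} (hc : 0 ≤ c) (hg : 0 < g) (hh : 0 ≤ h) :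
    c - 2 * Real.sqrt (g * h) = 0 ↔ h = c ^ 2 / (4 * g) := by
  rw [sub_eq_zero]
  constructor
  · intro hc_eq
    rw [eq_div_iff (by positivity), hc_eq, mul_pow, Real.sq_sqrt (by positivity)]
    ring
  · rintro rfl
    rw [show g * (c ^ 2 / (4 * g)) = (c / 2) ^ 2 by field_simp; ring,
      Real.sqrt_sq (by positivity)]
    ring

theorem sq_add_two_mul_sqrt_div_le {g hl vl : ℝ} (hg : 0 < g) (hhl : 0 ≤ hl)
    (hv₁ : -4 * Real.sqrt (g * hl) ≤ vl) (hv₂ : vl ≤ 0) :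
    (vl + 2 * Real.sqrt (g * hl)) ^ 2 / (4 * g) ≤ hl := by
  have hs : Real.sqrt (g * hl) ^ 2 = g * hl := Real.sq_sqrt (by positivity)
  rw [div_le_iff₀ (by positivity)]
  nlinarith [mul_nonpos_of_nonpos_of_nonneg hv₂ (by linarith : 0 ≤ vl + 4 * Real.sqrt (g * hl))]

theorem phil_of_le {g hl vl h : ℝ} (hh : h ≤ hl) :
    phil g hl vl h = vl + 2 * Real.sqrt (g * hl) - 2 * Real.sqrt (g * h) :=
  if_pos hh

theorem phil_neg_of_lt {g hl vl h : ℝ} (hg : 0 < g) (hhl : 0 < hl) (hv : vl ≤ 0)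
    (hh : hl < h) : phil g hl vl h < 0 := by
  have hshock : 0 < (h - hl) * Real.sqrt (g * (h + hl) / (2 * h * hl)) :=
    mul_pos (sub_pos.mpr hh) (Real.sqrt_pos.mpr (by have := hhl.trans hh; positivity))
  rw [phil, if_neg hh.not_ge]
  linarith

/-- If `−2√(g h_l) < v_l ≤ 0`, the discharge-form Lax curve has exactly one zero
in `(0, ∞)`, namely `h = (v_l + 2√(g h_l))²/(4g)`. -/
theorem philTilde_unique_zero (g hl vl : ℝ) (hg : 0 < g) (hhl : 0 < hl)
    (hv₁ : -2 * Real.sqrt (g * hl) < vl) (hv₂ : vl ≤ 0) :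
    ∀ h : ℝ, 0 < h →
      (philTilde g hl vl h = 0 ↔ h = (vl + 2 * Real.sqrt (g * hl)) ^ 2 / (4 * g)) := by
  intro h hh
  have hs : 0 ≤ Real.sqrt (g * hl) := Real.sqrt_nonneg _
  rw [philTilde, mul_eq_zero, or_iff_right hh.ne']
  rcases le_or_gt h hl with hrare | hshock
  · rw [phil_of_le hrare]
    exact sub_two_mul_sqrt_mul_eq_zero_iff (by linarith) hg hh.le
  · have hroot_le := sq_add_two_mul_sqrt_div_le hg hhl.le (by linarith) hv₂
    exact iff_of_false (phil_neg_of_lt hg hhl hv₂ hshock).ne (by rintro rfl; linarith)
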